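/- arXiv:1101.0015 — 4 statements merged into one kernel-verified Lean document; each statement's English description precedes it below -/
import Mathlib

section
/- For X = (x_{ij}) ∈ SL_3 with adjugate X̂ = (x̂_{ij}), the eight functions P_1 = x_{11}, P_2 = x_{13}, P_3 = x_{21}, P_4 = -x̂_{23}, P_5 = -x̂_{31}, P_6 = -x̂_{33}, P_7 = x_{13}x_{31} - x_{21}x_{23}, P_8 = x̂_{13}x̂_{31} - x̂_{21}x̂_{23} have linearly independent gradients at some point of SL_3; in particular there exists X ∈ SL_3 at which the differentials of P_1,...,P_8 span an 8-dimensional space (equal to the dimension of SL_3). -/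
/-! At `X₀ = [[1,1,1],[1,0,0],[0,1,0]]`, which has determinant 1 and adjugate
`[[0,1,0],[0,0,1],[1,-1,-1]]`, the differentials of `P₁,…,P₈` are sparse integer functionals,
and the tangent space is the hyperplane `tr(adj X₀ · Y) = 0`. The eight restricted differentials
are independent because there are eight tangent vectors on which they evaluate to the identity
matrix: the first eight columns of the inverse of the unimodular `9 × 9` matrix whose rows are
the eight differentials and `tr(adj X₀ · -)`. -/

open Matrix

/-- The initial extended cluster of the Cremmer–Gervais cluster structure on `SL₃`,
as functions of the matrix entries (indices are 0-based):
`P₁ = x₁₁`, `P₂ = x₁₃`, `P₃ = x₂₁`, `P₄ = -x̂₂₃`, `P₅ = -x̂₃₁`, `P₆ = -x̂₃₃`,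
`P₇ = x₁₃x₃₁ - x₂₁x₂₃`, `P₈ = x̂₁₃x̂₃₁ - x̂₂₁x̂₂₃`, where `X̂` is the adjugate of `X`. -/
def PCG : Fin 8 → (Fin 3 → Fin 3 → ℂ) → ℂ :=
  ![fun X => Matrix.of X 0 0,
    fun X => Matrix.of X 0 2,
    fun X => Matrix.of X 1 0,
    fun X => -((Matrix.of X).adjugate 1 2),
    fun X => -((Matrix.of X).adjugate 2 0),
    fun X => -((Matrix.of X).adjugate 2 2),
    fun X => Matrix.of X 0 2 * Matrix.of X 2 0 - Matrix.of X 1 0 * Matrix.of X 1 2,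
    fun X => (Matrix.of X).adjugate 0 2 * (Matrix.of X).adjugate 2 0 -
      (Matrix.of X).adjugate 1 0 * (Matrix.of X).adjugate 1 2]

/-- The tangent space to `SL₃` at an invertible matrix `X`:
matrices `Y` with `tr(X⁻¹ Y) = 0`. -/
noncomputable def slTangent (X : Fin 3 → Fin 3 → ℂ) : Submodule ℂ (Fin 3 → Fin 3 → ℂ) where
  carrier := {Y | ((Matrix.of X)⁻¹ * Matrix.of Y).trace = 0}
  add_mem' := by
    intro a b ha hb
    have h : Matrix.of (a + b) = Matrix.of a + Matrix.of b := rfl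
    simp only [Set.mem_setOf_eq, h, Matrix.mul_add, Matrix.trace_add] at *
    rw [ha, hb, add_zero]
  zero_mem' := by
    have h : Matrix.of (0 : Fin 3 → Fin 3 → ℂ) = (0 : Matrix (Fin 3) (Fin 3) ℂ) := rfl
    simp [Set.mem_setOf_eq, h]
  smul_mem' := by
    intro c a ha
    have h : Matrix.of (c • a) = c • Matrix.of a := rfl
    simp only [Set.mem_setOf_eq, h, Matrix.mul_smul, Matrix.trace_smul] at *
    rw [ha, smul_zero]

theorem linearIndependent_of_biorthogonal {ι R M : Type*} [DecidableEq ι] [CommRing R]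
    [AddCommGroup M] [Module R M] (φ : ι → M →ₗ[R] R) (v : ι → M)
    (h : ∀ i j, φ i (v j) = if i = j then 1 else 0) : LinearIndependent R φ := by
  rw [linearIndependent_iff']
  intro s g hg j hj
  simpa [h, hj] using LinearMap.congr_fun hg (v j)

theorem fderiv_entry {𝕜 m n : Type*} [NontriviallyNormedField 𝕜] [Fintype m] [Fintype n]
    (X v : m → n → 𝕜) (a : m) (b : n) :
    fderiv 𝕜 (fun Y : m → n → 𝕜 => Y a b) X v = v a b := by
  rw [fderiv_apply (by fun_prop), fderiv_apply (by fun_prop), fderiv_fun_id]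
  rfl

theorem mem_slTangent_iff_of_det_eq_one {X Y : Fin 3 → Fin 3 → ℂ} (hX : (of X).det = 1) :
    Y ∈ slTangent X ↔ ((of X).adjugate * of Y).trace = 0 := by
  change ((of X)⁻¹ * of Y).trace = 0 ↔ _
  rw [inv_def, hX, Ring.inverse_one, one_smul]

def pointCG : Fin 3 → Fin 3 → ℂ := ![![1, 1, 1], ![1, 0, 0], ![0, 1, 0]]

theorem det_pointCG : (of pointCG).det = 1 := by
  simp [det_fin_three, pointCG]

theorem mem_slTangent_pointCG_iff (Y : Fin 3 → Fin 3 → ℂ) :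
    Y ∈ slTangent pointCG ↔ Y 0 2 + Y 1 0 + Y 2 1 = Y 1 2 + Y 2 2 := by
  have htrace : ((of pointCG).adjugate * of Y).trace = Y 0 2 + Y 1 0 + Y 2 1 - (Y 1 2 + Y 2 2) := by
    simp [adjugate_fin_three, trace_fin_three, pointCG, vecHead, vecTail]
    ring
  rw [mem_slTangent_iff_of_det_eq_one det_pointCG, htrace, sub_eq_zero]

theorem fderiv_PCG_pointCG (v : Fin 3 → Fin 3 → ℂ) (i : Fin 8) :
    fderiv ℂ (PCG i) pointCG v =
      ![v 0 0, v 0 2, v 1 0, v 1 2 - v 0 2 - v 1 0, -(v 1 0 + v 2 1), v 0 1 + v 1 0 - v 1 1,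
        v 2 0 - v 1 2, v 1 2 + v 2 2 - v 1 1] i := by
  fin_cases i <;>
    simp (disch := fun_prop) only [PCG, adjugate_fin_three, of_apply, Fin.reduceFinMk, cons_val,
      fderiv_fun_sub, fderiv_fun_add, fderiv_fun_mul, fderiv_fun_neg, _root_.sub_apply,
      _root_.add_apply, _root_.smul_apply, _root_.neg_apply, fderiv_entry, smul_eq_mul, pointCG] <;>
    ring

def dualTangentCG : Fin 8 → Fin 3 → Fin 3 → ℂ :=
  ![![![1, 0, 0], ![0, 0, 0], ![0, 0, 0]],
    ![![0, 1, 1], ![0, 1, 1], ![1, 0, 0]],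
    ![![0, -1, 0], ![1, 0, 1], ![1, -1, -1]],
    ![![0, 0, 0], ![0, 0, 1], ![1, 0, -1]],
    ![![0, -1, 0], ![0, -1, 0], ![0, -1, -1]],
    ![![0, 1, 0], ![0, 0, 0], ![0, 0, 0]],
    ![![0, 0, 0], ![0, 0, 0], ![1, 0, 0]],
    ![![0, -1, 0], ![0, -1, 0], ![0, 0, 0]]]

theorem dualTangentCG_mem (j : Fin 8) : dualTangentCG j ∈ slTangent pointCG := by
  rw [mem_slTangent_pointCG_iff]
  fin_cases j <;> simp [dualTangentCG]

theorem fderiv_PCG_pointCG_dualTangentCG (i j : Fin 8) :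
    fderiv ℂ (PCG i) pointCG (dualTangentCG j) = if i = j then 1 else 0 := by
  rw [fderiv_PCG_pointCG]
  fin_cases i <;> fin_cases j <;> simp [dualTangentCG]

/-- There exists a point `X ∈ SL₃` at which the differentials of the eight functions
`P₁,…,P₈`, restricted to the tangent space of `SL₃` at `X`, are linearly independent;
in particular they span an 8-dimensional space (8 = dim SL₃). -/
theorem PCG_differentials_linearIndependent :
    ∃ X : Fin 3 → Fin 3 → ℂ, (Matrix.of X).det = 1 ∧
      LinearIndependent ℂ
        (fun i : Fin 8 =>
          ((fderiv ℂ (PCG i) X).toLinearMap).domRestrict (slTangent X)) :=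
  ⟨pointCG, det_pointCG, linearIndependent_of_biorthogonal _
    (fun j => ⟨dualTangentCG j, dualTangentCG_mem j⟩) fderiv_PCG_pointCG_dualTangentCG⟩
end

section
/- There do not exist three rational functions p_1, p_2, p_3 in variables z_1, z_2, z_3 over ℂ, algebraically independent, and constants c_{ij} ∈ ℂ such that {p_i, p_j} = c_{ij} p_i p_j for all i,j, where the Poisson bracket is determined by {z_1,z_2} = 1, {z_1,z_3} = 0, {z_2,z_3} = 0. -/
/-!
If `{x, y} = c x y` with `x = f / g`, `y = u / w` nonzero, clearing denominators turns this into a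
polynomial identity whose left side is a sum of products in which `∂/∂z₁` is applied once. Since
`∂/∂z₁` lowers the `z₁`-degree and `∂/∂z₂` does not raise it, the left side has smaller
`z₁`-degree than `c f g u w`, so `c = 0`.

Hence the `pᵢ` Poisson-commute: the vectors `(D₁ pᵢ, D₂ pᵢ)` are pairwise proportional, and some
nonzero combination `a D₁ + b D₂` kills every `pᵢ`. As `trdeg_ℂ K = 3`, the `pᵢ` form a
transcendence basis, so `K` is algebraic over `ℂ(p₁, p₂, p₃)`; in characteristic zero a derivation
vanishing there vanishes on all of `K`. Evaluating at `z₁` and `z₂` gives `a = b = 0`.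
-/

open MvPolynomial

namespace MvPolynomial

variable {R σ : Type*} [CommRing R]

lemma add_single_mem_support_of_mem_support_pderiv {j : σ} {q : MvPolynomial σ R}
    {m : σ →₀ ℕ} (hm : m ∈ (pderiv j q).support) : m + Finsupp.single j 1 ∈ q.support := by
  rw [mem_support_iff, coeff_pderiv] at hm
  exact mem_support_iff.mpr (left_ne_zero_of_mul hm)

lemma degreeOf_pderiv_le (i j : σ) (q : MvPolynomial σ R) :
    degreeOf i (pderiv j q) ≤ degreeOf i q :=
  degreeOf_le_iff.mpr fun m hm =>
    le_trans (by simp) (monomial_le_degreeOf i (add_single_mem_support_of_mem_support_pderiv hm))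

-- The factor `X i` makes the drop of `degreeOf i` under `pderiv i` an inequality with no
-- exceptional case for a vanishing derivative.
lemma degreeOf_X_mul_pderiv_le (i : σ) (q : MvPolynomial σ R) :
    degreeOf i (X i * pderiv i q) ≤ degreeOf i q := by
  refine degreeOf_le_iff.mpr fun m hm => ?_
  simp only [support_X_mul, Finset.mem_map, addLeftEmbedding_apply] at hm
  obtain ⟨m, hm, rfl⟩ := hm
  simpa [add_comm] using monomial_le_degreeOf i (add_single_mem_support_of_mem_support_pderiv hm)

/-- The numerator of `∂ᵢ (f / g) = pderivNum i f g / g ^ 2`. -/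
noncomputable def pderivNum (i : σ) (f g : MvPolynomial σ R) : MvPolynomial σ R :=
  pderiv i f * g - f * pderiv i g

lemma degreeOf_pderivNum_le (i j : σ) (f g : MvPolynomial σ R) :
    degreeOf i (pderivNum j f g) ≤ degreeOf i f + degreeOf i g := by
  have := degreeOf_sub_le i (pderiv j f * g) (f * pderiv j g)
  have := degreeOf_mul_le i (pderiv j f) g
  have := degreeOf_mul_le i f (pderiv j g)
  have := degreeOf_pderiv_le i j f
  have := degreeOf_pderiv_le i j g
  unfold pderivNum
  omega

lemma degreeOf_X_mul_pderivNum_le (i : σ) (f g : MvPolynomial σ R) :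
    degreeOf i (X i * pderivNum i f g) ≤ degreeOf i f + degreeOf i g := by
  rw [show X i * pderivNum i f g = X i * pderiv i f * g - f * (X i * pderiv i g) by
    unfold pderivNum; ring]
  have := degreeOf_sub_le i (X i * pderiv i f * g) (f * (X i * pderiv i g))
  have := degreeOf_mul_le i (X i * pderiv i f) g
  have := degreeOf_mul_le i f (X i * pderiv i g)
  have := degreeOf_X_mul_pderiv_le i f
  have := degreeOf_X_mul_pderiv_le i g
  omega

lemma pderivNum_jacobian_ne_C_mul [IsDomain R] {f g u w : MvPolynomial σ R}
    (hf : f ≠ 0) (hg : g ≠ 0) (hu : u ≠ 0) (hw : w ≠ 0) {c : R} (hc : c ≠ 0) (i j : σ) :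
    pderivNum i f g * pderivNum j u w - pderivNum j f g * pderivNum i u w ≠
      C c * (f * g * (u * w)) := by
  intro h
  set S := degreeOf i f + degreeOf i g + (degreeOf i u + degreeOf i w)
  have hle : degreeOf i (X i * (C c * (f * g * (u * w)))) ≤ S := by
    rw [← h, mul_sub, ← mul_assoc, mul_left_comm]
    refine (degreeOf_sub_le _ _ _).trans (max_le ?_ ?_)
    · exact (degreeOf_mul_le _ _ _).trans
        (add_le_add (degreeOf_X_mul_pderivNum_le i f g) (degreeOf_pderivNum_le i j u w))
    · exact (degreeOf_mul_le _ _ _).trans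
        (add_le_add (degreeOf_pderivNum_le i j f g) (degreeOf_X_mul_pderivNum_le i u w))
  have hfg : f * g ≠ 0 := mul_ne_zero hf hg
  have huw : u * w ≠ 0 := mul_ne_zero hu hw
  rw [degreeOf_mul_eq (X_ne_zero i) (mul_ne_zero (C_ne_zero.mpr hc) (mul_ne_zero hfg huw)),
    degreeOf_C_mul _ _ (mem_nonZeroDivisors_of_ne_zero hc), degreeOf_mul_eq hfg huw,
    degreeOf_mul_eq hf hg, degreeOf_mul_eq hu hw, degreeOf_X_self] at hle
  omega

variable {K : Type*}

lemma derivation_mul_sq_eq_pderivNum [CommRing K] [Algebra R K]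
    [Algebra (MvPolynomial σ R) K] (D : Derivation R K K) (j : σ)
    (hD : ∀ q : MvPolynomial σ R, D (algebraMap _ K q) = algebraMap _ K (pderiv j q)) {x : K}
    {f g : MvPolynomial σ R} (hx : x * algebraMap _ K g = algebraMap _ K f) :
    D x * algebraMap _ K g ^ 2 = algebraMap _ K (pderivNum j f g) := by
  have h := congrArg D hx
  rw [D.leibniz, hD, hD, smul_eq_mul, smul_eq_mul] at h
  rw [pderivNum, map_sub, map_mul, map_mul]
  linear_combination algebraMap _ K g * h - algebraMap _ K (pderiv j g) * hx

theorem eq_zero_of_jacobian_eq_algebraMap_mul [IsDomain R] [Field K] [Algebra R K]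
    [Algebra (MvPolynomial σ R) K] [IsFractionRing (MvPolynomial σ R) K]
    [IsScalarTower R (MvPolynomial σ R) K] (D₁ D₂ : Derivation R K K) (i j : σ)
    (hD₁ : ∀ q : MvPolynomial σ R, D₁ (algebraMap _ K q) = algebraMap _ K (pderiv i q))
    (hD₂ : ∀ q : MvPolynomial σ R, D₂ (algebraMap _ K q) = algebraMap _ K (pderiv j q))
    {x y : K} (hx : x ≠ 0) (hy : y ≠ 0) {c : R}
    (h : D₁ x * D₂ y - D₂ x * D₁ y = algebraMap R K c * (x * y)) : c = 0 := by
  by_contra hc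
  obtain ⟨f, g, hg, hfg⟩ := IsFractionRing.div_surjective (A := MvPolynomial σ R) x
  obtain ⟨u, w, hw, huw⟩ := IsFractionRing.div_surjective (A := MvPolynomial σ R) y
  have hf : f ≠ 0 := by rintro rfl; simp [← hfg] at hx
  have hu : u ≠ 0 := by rintro rfl; simp [← huw] at hy
  have hxg : x * algebraMap _ K g = algebraMap _ K f := by
    rw [← hfg, div_mul_cancel₀ _ (IsFractionRing.to_map_ne_zero_of_mem_nonZeroDivisors hg)]
  have hyw : y * algebraMap _ K w = algebraMap _ K u := by
    rw [← huw, div_mul_cancel₀ _ (IsFractionRing.to_map_ne_zero_of_mem_nonZeroDivisors hw)]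
  refine pderivNum_jacobian_ne_C_mul hf (nonZeroDivisors.ne_zero hg) hu
    (nonZeroDivisors.ne_zero hw) hc i j (IsFractionRing.injective (MvPolynomial σ R) K ?_)
  simp only [map_sub, map_mul]
  rw [← algebraMap_eq, ← IsScalarTower.algebraMap_apply, ← derivation_mul_sq_eq_pderivNum D₁ i hD₁ hxg,
    ← derivation_mul_sq_eq_pderivNum D₁ i hD₁ hyw, ← derivation_mul_sq_eq_pderivNum D₂ j hD₂ hxg,
    ← derivation_mul_sq_eq_pderivNum D₂ j hD₂ hyw, ← hxg, ← hyw]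
  linear_combination (algebraMap _ K g ^ 2 * algebraMap _ K w ^ 2) * h

end MvPolynomial

open Polynomial

namespace Derivation

variable {k K : Type*} [Field k] [Field K] [Algebra k K]

def fieldOfConstants (D : Derivation k K K) : IntermediateField k K where
  carrier := {x | D x = 0}
  mul_mem' ha hb := by simp_all [D.leibniz]
  add_mem' ha hb := by simp_all
  algebraMap_mem' := D.map_algebraMap
  inv_mem' x hx := by simp_all [D.leibniz_inv]

lemma apply_aeval_of_fieldOfConstants (D : Derivation k K K) (t : K) (f : D.fieldOfConstants[X]) :
    D (aeval t f) = aeval t (derivative f) * D t := by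
  have h0 : (0 : Derivation k D.fieldOfConstants D.fieldOfConstants).mapCoeffs f = 0 := by
    ext; simp
  simpa [h0] using (0 : Derivation k D.fieldOfConstants D.fieldOfConstants).apply_aeval_eq' D
    (Algebra.linearMap _ K) (fun a => (a.2 : D a = 0).symm) t f

lemma apply_eq_zero_of_isAlgebraic [CharZero k] (D : Derivation k K K) {t : K}
    (ht : IsAlgebraic D.fieldOfConstants t) : D t = 0 := by
  have hsep := (minpoly.irreducible ht.isIntegral).separable
  have h := D.apply_aeval_of_fieldOfConstants t (minpoly _ t)
  rw [minpoly.aeval, map_zero, eq_comm, mul_eq_zero] at h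
  exact h.resolve_left (hsep.aeval_derivative_ne_zero (minpoly.aeval _ t))

lemma eq_zero_of_isTranscendenceBasis [CharZero k] {ι : Type*} (D : Derivation k K K) {p : ι → K}
    (hp : IsTranscendenceBasis k p) (hD : ∀ i, D (p i) = 0) : D = 0 := by
  have hle : IntermediateField.adjoin k (Set.range p) ≤ D.fieldOfConstants :=
    IntermediateField.adjoin_le_iff.mpr (Set.range_subset_iff.mpr hD)
  have := hp.isAlgebraic_field
  ext t
  exact D.apply_eq_zero_of_isAlgebraic <| IsAlgebraic.tower_top_of_subalgebra_le
    (B := D.fieldOfConstants.toSubalgebra) hle (Algebra.IsAlgebraic.isAlgebraic t)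

end Derivation

theorem trdeg_of_isFractionRing_mvPolynomial (k σ K : Type*) [Field k] [Fintype σ] [Field K]
    [Algebra (MvPolynomial σ k) K] [IsFractionRing (MvPolynomial σ k) K] [Algebra k K]
    [IsScalarTower k (MvPolynomial σ k) K] :
    Algebra.trdeg k K = Fintype.card σ := by
  have : Algebra.IsAlgebraic (MvPolynomial σ k) K :=
    IsLocalization.isAlgebraic _ (nonZeroDivisors _)
  have := lift_trdeg_add_eq k (MvPolynomial σ k) K
  rw [MvPolynomial.trdeg_of_isDomain, trdeg_eq_zero (R := MvPolynomial σ k)] at this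
  simpa using this.symm

lemma exists_nontrivial_combination_eq_zero {K ι : Type*} [Field K]
    (v w : ι → K) (h : ∀ i j, v i * w j = w i * v j) :
    ∃ a b : K, (a ≠ 0 ∨ b ≠ 0) ∧ ∀ i, a * v i + b * w i = 0 := by
  by_cases hv : ∀ i, v i = 0
  · exact ⟨1, 0, Or.inl one_ne_zero, fun i => by simp [hv i]⟩
  · push Not at hv
    obtain ⟨k, hk⟩ := hv
    exact ⟨w k, -v k, Or.inr (neg_ne_zero.mpr hk), fun i => by linear_combination -h k i⟩

/-- Non-existence of a log-canonical transcendence basis for the Poisson bracket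
`{f,g} = ∂f/∂z₁ ∂g/∂z₂ - ∂f/∂z₂ ∂g/∂z₁` on `ℂ(z₁,z₂,z₃)`.

Here `K` is the field of rational functions `ℂ(z₁,z₂,z₃)` (the fraction field of
`ℂ[z₁,z₂,z₃]`), and `D₁`, `D₂` are the unique derivations of `K` extending
`∂/∂z₁` and `∂/∂z₂`.  The bracket `{f,g} = D₁f · D₂g - D₂f · D₁g` satisfies
`{z₁,z₂} = 1`, `{z₁,z₃} = 0`, `{z₂,z₃} = 0`.  There is no algebraically
independent triple `p₁,p₂,p₃ ∈ K` with `{p_i,p_j} = c_{ij} p_i p_j` for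
constants `c_{ij} ∈ ℂ`. -/
theorem no_log_canonical_basis
    (K : Type*) [Field K] [Algebra (MvPolynomial (Fin 3) ℂ) K]
    [IsFractionRing (MvPolynomial (Fin 3) ℂ) K]
    [Algebra ℂ K] [IsScalarTower ℂ (MvPolynomial (Fin 3) ℂ) K]
    (D₁ D₂ : Derivation ℂ K K)
    (hD₁ : ∀ q : MvPolynomial (Fin 3) ℂ,
      D₁ (algebraMap (MvPolynomial (Fin 3) ℂ) K q) =
        algebraMap (MvPolynomial (Fin 3) ℂ) K (pderiv 0 q))
    (hD₂ : ∀ q : MvPolynomial (Fin 3) ℂ,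
      D₂ (algebraMap (MvPolynomial (Fin 3) ℂ) K q) =
        algebraMap (MvPolynomial (Fin 3) ℂ) K (pderiv 1 q)) :
    ¬ ∃ p : Fin 3 → K, AlgebraicIndependent ℂ p ∧
        ∃ c : Fin 3 → Fin 3 → ℂ, ∀ i j : Fin 3,
          D₁ (p i) * D₂ (p j) - D₂ (p i) * D₁ (p j) =
            algebraMap ℂ K (c i j) * (p i * p j) := by
  rintro ⟨p, hind, c, hc⟩
  have hc0 : ∀ i j, c i j = 0 := fun i j =>
    eq_zero_of_jacobian_eq_algebraMap_mul D₁ D₂ 0 1 hD₁ hD₂ (hind.ne_zero i) (hind.ne_zero j)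
      (hc i j)
  have hcomm : ∀ i j, D₁ (p i) * D₂ (p j) = D₂ (p i) * D₁ (p j) := fun i j =>
    sub_eq_zero.mp (by simpa [hc0] using hc i j)
  obtain ⟨a, b, hab, hvanish⟩ := exists_nontrivial_combination_eq_zero _ _ hcomm
  have hbasis : IsTranscendenceBasis ℂ p :=
    hind.isTranscendenceBasis_of_lift_trdeg_le_of_finite (by
      rw [trdeg_of_isFractionRing_mvPolynomial ℂ (Fin 3) K]; simp)
  have hD : a • D₁ + b • D₂ = 0 :=
    (a • D₁ + b • D₂).eq_zero_of_isTranscendenceBasis hbasis (by simpa using hvanish)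
  have hD_X := fun l : Fin 3 => DFunLike.congr_fun hD (algebraMap (MvPolynomial (Fin 3) ℂ) K (X l))
  have ha : a = 0 := by simpa [hD₁, hD₂, pderiv_X] using hD_X 0
  have hb : b = 0 := by simpa [hD₁, hD₂, pderiv_X] using hD_X 1
  exact hab.elim (· ha) (· hb)
end

section
/- Let p_1, p_2 ∈ ℂ(z_1,z_2,z_3) be nonzero rational functions and define {p_1,p_2} = ∂p_1/∂z_1 · ∂p_2/∂z_2 - ∂p_1/∂z_2 · ∂p_2/∂z_1. Write each p_i as a ratio of polynomials in z_1 (with coefficients rational in z_2, z_3) and let δ_i be the difference of the z_1-degrees of the numerator and denominator of p_i. Then {p_1, p_2}, written as such a ratio, has numerator-minus-denominator z_1-degree at most δ_1 + δ_2 - 1. In particular, {p_1, p_2} cannot equal c·p_1p_2 for any nonzero constant c. -/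
/-!
Numerator and denominator of `p` are polynomials in `z₁`, and on polynomials `∂/∂z₁` lowers the
degree by one while `∂/∂z₂`, acting on the coefficients only, does not raise it. The quotient rule
`D(f/g) = (D f · g - f · D g)/g²` then gives `deg ∂₁p ≤ deg p - 1` and `deg ∂₂p ≤ deg p`, so both
products in the bracket have degree at most `δ₁ + δ₂ - 1`, whereas `c p₁ p₂` has degree `δ₁ + δ₂`.
-/

open scoped Polynomial

namespace Polynomial

variable {F : Type*} [Field F]

theorem degree_derivative_add_one_le (f : F[X]) : (derivative f).degree + 1 ≤ f.degree := by
  rcases eq_or_ne f 0 with rfl | hf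
  · simp
  · exact Nat.WithBot.add_one_le_of_lt (degree_derivative_lt hf)

theorem degree_sum_C_mul_X_pow_le (δ : F → F) (f : F[X]) :
    (∑ i ∈ f.support, C (δ (f.coeff i)) * X ^ i).degree ≤ f.degree :=
  (degree_sum_le _ _).trans <| Finset.sup_le fun i hi =>
    (degree_C_mul_X_pow_le _ _).trans (le_degree_of_mem_supp i hi)

theorem degree_mul_sub_mul_add_le {a b f g : F[X]} {k : ℕ} (ha : a.degree + k ≤ f.degree)
    (hb : b.degree + k ≤ g.degree) : (a * g - f * b).degree + k ≤ f.degree + g.degree :=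
  calc (a * g - f * b).degree + k ≤ max (a * g).degree (f * b).degree + k :=
        add_le_add_left (degree_sub_le _ _) _
    _ = max (a.degree + k + g.degree) (f.degree + (b.degree + k)) := by
        rw [degree_mul, degree_mul, ← max_add_add_right]
        congr 1 <;> ac_rfl
    _ ≤ f.degree + g.degree := max_le (add_le_add_left ha _) (add_le_add_right hb _)

end Polynomial

namespace RatFunc

variable {F : Type*} [Field F]

-- `0` lies in every `intDegreeLE m`: it plays the role of degree `-∞`, not of `intDegree 0 = 0`.
def intDegreeLE (m : ℤ) : Set (RatFunc F) := {x | x ≠ 0 → x.intDegree ≤ m}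

theorem mul_mem_intDegreeLE {x y : RatFunc F} {m n : ℤ} (hx : x ∈ intDegreeLE m)
    (hy : y ∈ intDegreeLE n) : x * y ∈ intDegreeLE (m + n) := by
  intro hxy
  rw [intDegree_mul (left_ne_zero_of_mul hxy) (right_ne_zero_of_mul hxy)]
  exact add_le_add (hx (left_ne_zero_of_mul hxy)) (hy (right_ne_zero_of_mul hxy))

theorem sub_mem_intDegreeLE {x y : RatFunc F} {m : ℤ} (hx : x ∈ intDegreeLE m)
    (hy : y ∈ intDegreeLE m) : x - y ∈ intDegreeLE m := by
  intro hxy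
  rcases eq_or_ne x 0 with rfl | hx0
  · rw [zero_sub, intDegree_neg]
    exact hy (by simpa using hxy)
  rcases eq_or_ne y 0 with rfl | hy0
  · rw [sub_zero]
    exact hx hx0
  rw [sub_eq_add_neg] at hxy ⊢
  calc (x + -y).intDegree ≤ max x.intDegree (-y).intDegree :=
        intDegree_add_le (neg_ne_zero.mpr hy0) hxy
    _ ≤ m := max_le (hx hx0) (by rw [intDegree_neg]; exact hy hy0)

theorem C_mul_mul_notMem_intDegreeLE {c : F} (hc : c ≠ 0) {x y : RatFunc F} (hx : x ≠ 0)
    (hy : y ≠ 0) : C c * (x * y) ∉ intDegreeLE (x.intDegree + y.intDegree - 1) := by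
  have hc' : C c ≠ 0 := by simpa using hc
  intro h
  have := h (mul_ne_zero hc' (mul_ne_zero hx hy))
  rw [intDegree_mul hc' (mul_ne_zero hx hy), intDegree_C, intDegree_mul hx hy] at this
  omega

section Derivation

section OfLeibniz

variable (D : RatFunc F → RatFunc F) (hadd : ∀ x y, D (x + y) = D x + D y)
  (hmul : ∀ x y, D (x * y) = x * D y + y * D x)

def derivationOfLeibniz : Derivation ℤ (RatFunc F) (RatFunc F) where
  toFun := D
  map_add' := hadd
  map_smul' n x := by
    -- the `ℤ`-action on the source comes from `RatFunc`'s own `ℤ`-algebra structure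
    rw [RingHom.id_apply, Algebra.smul_def, eq_intCast, ← zsmul_eq_mul]
    exact map_zsmul (AddMonoidHom.mk' D hadd) n x
  map_one_eq_zero' := by simpa using hmul 1 1
  leibniz' := hmul

@[simp]
theorem derivationOfLeibniz_apply (x : RatFunc F) : derivationOfLeibniz D hadd hmul x = D x :=
  rfl

end OfLeibniz

variable (D : Derivation ℤ (RatFunc F) (RatFunc F))

theorem apply_algebraMap_eq (f : F[X]) :
    D (algebraMap F[X] (RatFunc F) f) =
      algebraMap F[X] (RatFunc F) (Polynomial.derivative f) * D X +
        ∑ i ∈ f.support, X ^ i * D (C (f.coeff i)) := by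
  conv_lhs => rw [f.as_sum_support_C_mul_X_pow]
  rw [Polynomial.derivative_apply, Polynomial.sum, map_sum, map_sum, map_sum, Finset.sum_mul,
    ← Finset.sum_add_distrib]
  refine Finset.sum_congr rfl fun i _ => ?_
  simp only [map_mul, map_pow, algebraMap_C, algebraMap_X, Derivation.leibniz,
    Derivation.leibniz_pow, smul_eq_mul, nsmul_eq_mul, map_natCast]
  ring

theorem exists_apply_algebraMap_degree_add_one_le (hX : D X = 1) (hC : ∀ a, D (C a) = 0)
    (f : F[X]) : ∃ g : F[X], D (algebraMap F[X] (RatFunc F) f) = algebraMap F[X] (RatFunc F) g ∧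
      g.degree + 1 ≤ f.degree :=
  ⟨Polynomial.derivative f, by simp [apply_algebraMap_eq, hX, hC], f.degree_derivative_add_one_le⟩

theorem exists_apply_algebraMap_degree_le (δ : F → F) (hX : D X = 0)
    (hC : ∀ a, D (C a) = C (δ a)) (f : F[X]) :
    ∃ g : F[X], D (algebraMap F[X] (RatFunc F) f) = algebraMap F[X] (RatFunc F) g ∧
      g.degree ≤ f.degree :=
  ⟨∑ i ∈ f.support, Polynomial.C (δ (f.coeff i)) * Polynomial.X ^ i,
    by simp [apply_algebraMap_eq, hX, hC, mul_comm (X ^ _)],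
    Polynomial.degree_sum_C_mul_X_pow_le δ f⟩

theorem apply_mem_intDegreeLE (k : ℕ) (hpoly : ∀ f : F[X], ∃ g : F[X],
      D (algebraMap F[X] (RatFunc F) f) = algebraMap F[X] (RatFunc F) g ∧
        g.degree + k ≤ f.degree)
    {p : RatFunc F} (hp : p ≠ 0) : D p ∈ intDegreeLE (p.intDegree - k) := by
  intro hDp
  obtain ⟨a, ha, hak⟩ := hpoly p.num
  obtain ⟨b, hb, hbk⟩ := hpoly p.denom
  have hquot : D p = algebraMap F[X] (RatFunc F) (a * p.denom - p.num * b) /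
      algebraMap F[X] (RatFunc F) (p.denom ^ 2) := by
    conv_lhs => rw [← num_div_denom p]
    rw [Derivation.leibniz_div, ha, hb]
    simp only [map_sub, map_mul, map_pow, smul_eq_mul, inv_pow]
    ring
  have hN : a * p.denom - p.num * b ≠ 0 := by
    rintro h
    simp only [h, map_zero, zero_div] at hquot
    exact hDp hquot
  have hdeg := Polynomial.degree_mul_sub_mul_add_le hak hbk
  rw [Polynomial.degree_eq_natDegree hN, Polynomial.degree_eq_natDegree (num_ne_zero hp),
    Polynomial.degree_eq_natDegree p.denom_ne_zero] at hdeg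
  norm_cast at hdeg
  rw [hquot, intDegree_div (algebraMap_ne_zero hN)
    (algebraMap_ne_zero (pow_ne_zero 2 p.denom_ne_zero)), intDegree_polynomial,
    intDegree_polynomial, Polynomial.natDegree_pow]
  unfold intDegree
  omega

end Derivation

end RatFunc

theorem bracket_intDegree_le_general (F : Type*) [Field F]
    (D₁ D₂ : RatFunc F → RatFunc F) (δ : F → F)
    (hD₁add : ∀ f g, D₁ (f + g) = D₁ f + D₁ g)
    (hD₁mul : ∀ f g, D₁ (f * g) = f * D₁ g + g * D₁ f)
    (hD₂add : ∀ f g, D₂ (f + g) = D₂ f + D₂ g)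
    (hD₂mul : ∀ f g, D₂ (f * g) = f * D₂ g + g * D₂ f)
    (hD₁X : D₁ RatFunc.X = 1)
    (hD₁C : ∀ a : F, D₁ (RatFunc.C a) = 0)
    (hD₂X : D₂ RatFunc.X = 0)
    (hD₂C : ∀ a : F, D₂ (RatFunc.C a) = RatFunc.C (δ a))
    (p₁ p₂ : RatFunc F) (hp₁ : p₁ ≠ 0) (hp₂ : p₂ ≠ 0) :
    (D₁ p₁ * D₂ p₂ - D₂ p₁ * D₁ p₂ ≠ 0 →
      (D₁ p₁ * D₂ p₂ - D₂ p₁ * D₁ p₂).intDegree ≤ p₁.intDegree + p₂.intDegree - 1) ∧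
    ∀ c : F, c ≠ 0 →
      D₁ p₁ * D₂ p₂ - D₂ p₁ * D₁ p₂ ≠ RatFunc.C c * (p₁ * p₂) := by
  let d₁ := RatFunc.derivationOfLeibniz D₁ hD₁add hD₁mul
  let d₂ := RatFunc.derivationOfLeibniz D₂ hD₂add hD₂mul
  have h₁ {p : RatFunc F} (hp : p ≠ 0) : D₁ p ∈ RatFunc.intDegreeLE (p.intDegree - 1) := by
    simpa [d₁] using RatFunc.apply_mem_intDegreeLE d₁ 1
      (by simpa using RatFunc.exists_apply_algebraMap_degree_add_one_le d₁ hD₁X hD₁C) hp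
  have h₂ {p : RatFunc F} (hp : p ≠ 0) : D₂ p ∈ RatFunc.intDegreeLE p.intDegree := by
    simpa [d₂] using RatFunc.apply_mem_intDegreeLE d₂ 0
      (by simpa using RatFunc.exists_apply_algebraMap_degree_le d₂ δ hD₂X hD₂C) hp
  have hbracket : D₁ p₁ * D₂ p₂ - D₂ p₁ * D₁ p₂ ∈
      RatFunc.intDegreeLE (p₁.intDegree + p₂.intDegree - 1) := by
    refine RatFunc.sub_mem_intDegreeLE ?_ ?_
    · rw [← sub_add_eq_add_sub]
      exact RatFunc.mul_mem_intDegreeLE (h₁ hp₁) (h₂ hp₂)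
    · rw [add_sub_assoc]
      exact RatFunc.mul_mem_intDegreeLE (h₂ hp₁) (h₁ hp₂)
  exact ⟨hbracket, fun c hc heq =>
    RatFunc.C_mul_mul_notMem_intDegreeLE hc hp₁ hp₂ (heq ▸ hbracket)⟩

/-- The degree-counting lemma.  Work in `K = ℂ(z₂,z₃)(z₁) = RatFunc F`, where
`F = ℂ(z₂,z₃)` is any field of coefficients; `z₁` is the variable `RatFunc.X`.
`RatFunc.intDegree` is the difference of the `z₁`-degrees of the numerator and
denominator.  Let `D₁ = ∂/∂z₁` (a derivation with `D₁ z₁ = 1`, vanishing on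
coefficients), and let `D₂ = ∂/∂z₂` (a derivation with `D₂ z₁ = 0`, acting on
coefficients through a derivation `δ` of `F`).  Then for nonzero `p₁, p₂`, if the
bracket `{p₁,p₂} = D₁p₁·D₂p₂ - D₂p₁·D₁p₂` is nonzero, its `z₁`-degree is at most
`δ₁ + δ₂ - 1`; in particular `{p₁,p₂} ≠ c·p₁p₂` for every nonzero constant `c`. -/
theorem bracket_intDegree_le (F : Type*) [Field F]
    (D₁ D₂ : RatFunc F → RatFunc F) (δ : F → F)
    (hD₁add : ∀ f g, D₁ (f + g) = D₁ f + D₁ g)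
    (hD₁mul : ∀ f g, D₁ (f * g) = f * D₁ g + g * D₁ f)
    (hD₂add : ∀ f g, D₂ (f + g) = D₂ f + D₂ g)
    (hD₂mul : ∀ f g, D₂ (f * g) = f * D₂ g + g * D₂ f)
    (hδadd : ∀ a b, δ (a + b) = δ a + δ b)
    (hδmul : ∀ a b, δ (a * b) = a * δ b + b * δ a)
    (hD₁X : D₁ RatFunc.X = 1)
    (hD₁C : ∀ a : F, D₁ (RatFunc.C a) = 0)
    (hD₂X : D₂ RatFunc.X = 0)
    (hD₂C : ∀ a : F, D₂ (RatFunc.C a) = RatFunc.C (δ a))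
    (p₁ p₂ : RatFunc F) (hp₁ : p₁ ≠ 0) (hp₂ : p₂ ≠ 0) :
    (D₁ p₁ * D₂ p₂ - D₂ p₁ * D₁ p₂ ≠ 0 →
      (D₁ p₁ * D₂ p₂ - D₂ p₁ * D₁ p₂).intDegree ≤ p₁.intDegree + p₂.intDegree - 1) ∧
    ∀ c : F, c ≠ 0 →
      D₁ p₁ * D₂ p₂ - D₂ p₁ * D₁ p₂ ≠ RatFunc.C c * (p₁ * p₂) :=
  bracket_intDegree_le_general F D₁ D₂ δ hD₁add hD₁mul hD₂add hD₂mul hD₁X hD₁C hD₂X hD₂C p₁ p₂ hp₁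
    hp₂
end

section
/- Let B̃ be an n×(n+m) integer matrix with rank B̃ = n, and let a Poisson bracket on ℂ(x_1,...,x_{n+m}) satisfy {x_i,x_j} = ω_{ij}x_ix_j with skew-symmetric coefficient matrix Ω. If B̃Ω = (D 0) with D diagonal and invertible, then for each k ∈ [n] the adjacent cluster variable x'_k defined by the exchange relation x_kx'_k = Π_{b_{ki}>0} x_i^{b_{ki}} + Π_{b_{ki}<0} x_i^{-b_{ki}} again satisfies log-canonical relations with the other variables: {x'_k, x_j} = ω'_{kj} x'_k x_j for integer constants ω'_{kj}, for all j ≠ k. -/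
/-!
Fix `j ≠ k`. Then `δ := {·, x_j}` is a derivation in its first argument, and log-canonicity says
that each `x_i` is an eigenvector of `δ` with eigenvalue `ω_{ij} x_j`. Eigenvalues add under
products and negate under inverses, so a Laurent monomial `∏ x_i ^ a_i` has eigenvalue
`(∑ a_i ω_{ij}) x_j`. The two monomials of the exchange relation have exponent vectors
`[b_k]₊` and `[b_k]₋` whose difference is the row `b_k`, and `(B̃Ω)_{kj} = 0`, so they share the
same eigenvalue, hence so does their sum `x_k x'_k`. Dividing by `x_k` shows that `x'_k` is an
eigenvector too, with eigenvalue `(∑ [b_{ki}]₊ ω_{ij} - ω_{kj}) x_j`.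
-/

open Finset

namespace Derivation

def bracketLeft {A : Type*} [CommRing A] (br : A → A → A)
    (hadd : ∀ f g h, br (f + g) h = br f h + br g h)
    (hleibniz : ∀ f g h, br (f * g) h = f * br g h + g * br f h) (y : A) : Derivation ℤ A A :=
  mk' (AddMonoidHom.mk' (br · y) (hadd · · y)).toIntLinearMap (hleibniz · · y)

@[simp]
theorem bracketLeft_apply {A : Type*} [CommRing A] (br : A → A → A) (hadd hleibniz) (y f : A) :
    bracketLeft br hadd hleibniz y f = br f y :=
  rfl

variable {K : Type*} [Field K] (D : Derivation ℤ K K)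

theorem map_zpow_of_map_eq_mul {f c : K} (hf : f ≠ 0) (hD : D f = c * f) (a : ℤ) :
    D (f ^ a) = a * c * f ^ a := by
  rw [leibniz_zpow, hD, zsmul_eq_mul, smul_eq_mul, zpow_sub_one₀ hf]
  field_simp

theorem map_prod_zpow_of_map_eq_mul {ι : Type*} (s : Finset ι) {x c : ι → K}
    (hx : ∀ i, x i ≠ 0) (hD : ∀ i, D (x i) = c i * x i) (a : ι → ℤ) :
    D (∏ i ∈ s, x i ^ a i) = (∑ i ∈ s, a i * c i) * ∏ i ∈ s, x i ^ a i := by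
  classical
  induction s using Finset.induction_on with
  | empty => simp
  | insert i s hi ih =>
    rw [prod_insert hi, sum_insert hi, leibniz, ih, map_zpow_of_map_eq_mul D (hx i) (hD i),
      smul_eq_mul, smul_eq_mul]
    ring

theorem map_eq_sub_mul_of_map_mul_eq_mul {u v c d : K} (hu : u ≠ 0)
    (huv : D (u * v) = c * (u * v)) (hDu : D u = d * u) : D v = (c - d) * v := by
  rw [leibniz, hDu, smul_eq_mul, smul_eq_mul] at huv
  exact mul_left_cancel₀ hu (by linear_combination huv)

end Derivation

theorem sum_ite_pos_mul_eq_sum_ite_neg_mul {ι : Type*} (s : Finset ι) {b w : ι → ℤ}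
    (h : ∑ i ∈ s, b i * w i = 0) :
    ∑ i ∈ s, (if 0 < b i then b i else 0) * w i =
      ∑ i ∈ s, (if b i < 0 then -b i else 0) * w i := by
  rw [← sub_eq_zero, ← sum_sub_distrib, ← h]
  refine sum_congr rfl fun i _ => ?_
  rw [← sub_mul]
  congr 1
  split_ifs <;> omega

theorem exchange_log_canonical_general (n m : ℕ)
    (B : Matrix (Fin n) (Fin (n + m)) ℤ)
    (Ω : Matrix (Fin (n + m)) (Fin (n + m)) ℤ)
    (D : Fin n → ℤ)
    (hBΩ : ∀ (l : Fin n) (j : Fin (n + m)),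
      (∑ i, B l i * Ω i j) = if (j : ℕ) = (l : ℕ) then D l else 0)
    (K : Type*) [Field K] (x : Fin (n + m) → K) (hx : ∀ i, x i ≠ 0)
    (br : K → K → K)
    (hadd : ∀ f g h, br (f + g) h = br f h + br g h)
    (hleibniz : ∀ f g h, br (f * g) h = f * br g h + g * br f h)
    (hlog : ∀ i j, br (x i) (x j) = (Ω i j : K) * x i * x j)
    (k : Fin n) (j : Fin (n + m)) (hjk : (j : ℕ) ≠ (k : ℕ))
    (x'k : K)
    (hexch : x (Fin.castAdd m k) * x'k =
      (∏ i, x i ^ (if 0 < B k i then B k i else 0)) +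
        ∏ i, x i ^ (if B k i < 0 then -B k i else 0)) :
    ∃ w : ℤ, br x'k (x j) = (w : K) * x'k * x j := by
  set δ := Derivation.bracketLeft br hadd hleibniz (x j)
  have hδx (i : Fin (n + m)) : δ (x i) = (Ω i j * x j) * x i := by
    rw [Derivation.bracketLeft_apply, hlog]
    ring
  have hmono (a : Fin (n + m) → ℤ) :
      δ (∏ i, x i ^ a i) = ((∑ i, a i * Ω i j : ℤ) * x j) * ∏ i, x i ^ a i := by
    rw [δ.map_prod_zpow_of_map_eq_mul _ hx hδx]
    push_cast
    simp_rw [← mul_assoc, ← sum_mul]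
  set s := ∑ i, (if 0 < B k i then B k i else 0) * Ω i j
  have hs : s = ∑ i, (if B k i < 0 then -B k i else 0) * Ω i j :=
    sum_ite_pos_mul_eq_sum_ite_neg_mul _ (by rw [hBΩ, if_neg hjk])
  have hδexch : δ (x (Fin.castAdd m k) * x'k) = (s * x j) * (x (Fin.castAdd m k) * x'k) := by
    rw [hexch, map_add, hmono, hmono, ← hs]
    ring
  refine ⟨s - Ω (Fin.castAdd m k) j, ?_⟩
  rw [← Derivation.bracketLeft_apply br hadd hleibniz,
    δ.map_eq_sub_mul_of_map_mul_eq_mul (hx _) hδexch (hδx _)]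
  push_cast
  ring

/-- Compatibility propagates through exchange relations.  Let `B̃` be an
`n × (n+m)` integer matrix of full rank `n`, and let `{·,·}` be a Poisson
bracket on the field `ℂ(x₁,…,x_{n+m})` (here: an arbitrary field `K` together
with nonzero elements `x i` and a skew-symmetric biderivation `br`) which is
log-canonical in the `x i`: `{x_i,x_j} = ω_{ij} x_i x_j` with skew-symmetric
integer coefficient matrix `Ω`.  If `B̃Ω = (D 0)` with `D` diagonal and
invertible, then for each `k ∈ [n]` the adjacent cluster variable `x'_k`,
defined by the exchange relation
`x_k x'_k = ∏_{b_{ki}>0} x_i^{b_{ki}} + ∏_{b_{ki}<0} x_i^{-b_{ki}}`,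
again satisfies log-canonical relations with the remaining variables:
`{x'_k, x_j} = ω'_{kj} x'_k x_j` for integer constants `ω'_{kj}`, for all
`j ≠ k`. -/
theorem exchange_log_canonical (n m : ℕ)
    (B : Matrix (Fin n) (Fin (n + m)) ℤ)
    (hrank : (B.map ((↑) : ℤ → ℚ)).rank = n)
    (Ω : Matrix (Fin (n + m)) (Fin (n + m)) ℤ)
    (hΩskew : Ω.transpose = -Ω)
    (D : Fin n → ℤ) (hD : ∀ l, D l ≠ 0)
    (hBΩ : ∀ (l : Fin n) (j : Fin (n + m)),
      (∑ i, B l i * Ω i j) = if (j : ℕ) = (l : ℕ) then D l else 0)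
    (K : Type*) [Field K] (x : Fin (n + m) → K) (hx : ∀ i, x i ≠ 0)
    (br : K → K → K)
    (hadd : ∀ f g h, br (f + g) h = br f h + br g h)
    (hskew : ∀ f g, br f g = -br g f)
    (hleibniz : ∀ f g h, br (f * g) h = f * br g h + g * br f h)
    (hlog : ∀ i j, br (x i) (x j) = (Ω i j : K) * x i * x j)
    (k : Fin n) (j : Fin (n + m)) (hjk : (j : ℕ) ≠ (k : ℕ))
    (x'k : K)
    (hexch : x (Fin.castAdd m k) * x'k =
      (∏ i, x i ^ (if 0 < B k i then B k i else 0)) +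
        ∏ i, x i ^ (if B k i < 0 then -B k i else 0)) :
    ∃ w : ℤ, br x'k (x j) = (w : K) * x'k * x j :=
  exchange_log_canonical_general n m B Ω D hBΩ K x hx br hadd hleibniz hlog k j hjk x'k hexch
end
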